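/- The rational queer R-matrix R^ℏ₁₂(u,v) = (1/ℏ)·Id + P₁₂/(u−v) + J₁J₂P₁₂/(u+v) satisfies the associative Yang-Baxter equation: R^x₁₂(u₁,u₂)R^y₂₃(u₂,u₃) − R^y₁₃(u₁,u₃)R^{x−y}₁₂(u₁,u₂) − R^{y−x}₂₃(u₂,u₃)R^x₁₃(u₁,u₃) = 0 in End(ℂ^{N|N})^⊗3, for all complex parameters x, y, u₁, u₂, u₃ with x, y, x−y, u₁−u₂, u₂−u₃, u₁−u₃, u₁+u₂, u₂+u₃, u₁+u₃ all nonzero. -/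

import Mathlib

open Matrix BigOperators

noncomputable section

/-- Index set `{±1,…,±N}`: `false` codes a positive index, `true` a negative one. -/
abbrev Idx (N : ℕ) := Bool × Fin N

/-- Parity: positive indices are even, negative indices are odd. -/
def pty {N : ℕ} (i : Idx N) : ℕ := if i.1 then 1 else 0

/-- The index `-i`. -/
def nneg {N : ℕ} (i : Idx N) : Idx N := (!i.1, i.2)

/-- Matrix unit `e_{ij}` in `End(ℂ^{N|N})`. -/
def Em {N : ℕ} (i j : Idx N) : Matrix (Idx N) (Idx N) ℂ := Matrix.single i j 1

/-- `J = Σ_i (-1)^{p_i} e_{i,-i}`. -/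
def Jmat (N : ℕ) : Matrix (Idx N) (Idx N) ℂ := ∑ i : Idx N, ((-1 : ℂ) ^ pty i) • Em i (nneg i)

abbrev M3 (N : ℕ) := Matrix (Idx N × Idx N × Idx N) (Idx N × Idx N × Idx N) ℂ

/-- Graded (Koszul-sign) Kronecker product of three homogeneous matrices acting on
`(ℂ^{N|N})^{⊗3}`; `db`, `dc` are the `ℤ₂`-degrees of `b` and `c`. -/
def gk3 {N : ℕ} (a b c : Matrix (Idx N) (Idx N) ℂ) (db dc : ℕ) : M3 N :=
  fun x y => (-1 : ℂ) ^ (db * pty y.1 + dc * (pty y.1 + pty y.2.1)) *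
    (a x.1 y.1 * (b x.2.1 y.2.1 * c x.2.2 y.2.2))

/-- Superpermutation `P₁₂ = Σ_{i,j} (-1)^{p_j} e_{ij} ⊗ e_{ji} ⊗ 1`. -/
def P12 (N : ℕ) : M3 N :=
  ∑ i : Idx N, ∑ j : Idx N, ((-1 : ℂ) ^ pty j) • gk3 (Em i j) (Em j i) 1 (pty i + pty j) 0

/-- Superpermutation `P₁₃ = Σ_{i,j} (-1)^{p_j} e_{ij} ⊗ 1 ⊗ e_{ji}`. -/
def P13 (N : ℕ) : M3 N :=
  ∑ i : Idx N, ∑ j : Idx N, ((-1 : ℂ) ^ pty j) • gk3 (Em i j) 1 (Em j i) 0 (pty i + pty j)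

/-- Superpermutation `P₂₃ = Σ_{i,j} (-1)^{p_j} 1 ⊗ e_{ij} ⊗ e_{ji}`. -/
def P23 (N : ℕ) : M3 N :=
  ∑ i : Idx N, ∑ j : Idx N,
    ((-1 : ℂ) ^ pty j) • gk3 1 (Em i j) (Em j i) (pty i + pty j) (pty i + pty j)

/-- `J` acting on the first tensor factor of `(ℂ^{N|N})^{⊗3}`. -/
def J1 (N : ℕ) : M3 N := gk3 (Jmat N) 1 1 0 0
/-- `J` acting on the second tensor factor (with Koszul signs). -/
def J2 (N : ℕ) : M3 N := gk3 1 (Jmat N) 1 1 0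
/-- `J` acting on the third tensor factor (with Koszul signs). -/
def J3 (N : ℕ) : M3 N := gk3 1 1 (Jmat N) 0 1

/-- The rational queer R-matrix on legs 1,2: `(1/ℏ)·Id + P₁₂/(u−v) + J₁J₂P₁₂/(u+v)`. -/
def Rr12 (N : ℕ) (h u v : ℂ) : M3 N :=
  h⁻¹ • (1 : M3 N) + (u - v)⁻¹ • P12 N + (u + v)⁻¹ • (J1 N * J2 N * P12 N)

/-- The rational queer R-matrix on legs 1,3. -/
def Rr13 (N : ℕ) (h u v : ℂ) : M3 N :=
  h⁻¹ • (1 : M3 N) + (u - v)⁻¹ • P13 N + (u + v)⁻¹ • (J1 N * J3 N * P13 N)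

/-- The rational queer R-matrix on legs 2,3. -/
def Rr23 (N : ℕ) (h u v : ℂ) : M3 N :=
  h⁻¹ • (1 : M3 N) + (u - v)⁻¹ • P23 N + (u + v)⁻¹ • (J2 N * J3 N * P23 N)

/-! ### Signed permutation matrices -/

/-- A "signed permutation" matrix on the triple index set. -/
def sp {N : ℕ} (σ : Idx N × Idx N × Idx N → Idx N × Idx N × Idx N)
    (s : Idx N × Idx N × Idx N → ℂ) : M3 N := fun x y => if y = σ x then s x else 0

lemma sp_mul {N : ℕ} (σ τ : Idx N × Idx N × Idx N → Idx N × Idx N × Idx N)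
    (s t : Idx N × Idx N × Idx N → ℂ) :
    sp σ s * sp τ t = sp (fun x => τ (σ x)) (fun x => s x * t (σ x)) := by
  ext x y
  rw [Matrix.mul_apply]
  simp only [sp, ite_mul, mul_ite, zero_mul, mul_zero]
  rw [Finset.sum_eq_single (σ x)]
  · simp
  · intro z _ hz; simp [hz]
  · intro h; exact absurd (Finset.mem_univ _) h

lemma sp_congr {N : ℕ} {σ τ : Idx N × Idx N × Idx N → Idx N × Idx N × Idx N}
    {s t : Idx N × Idx N × Idx N → ℂ} (hσ : ∀ x, σ x = τ x) (hs : ∀ x, s x = t x) :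
    sp σ s = sp τ t := by
  ext x y; simp only [sp, hσ x, hs x]

lemma sp_neg {N : ℕ} (σ : Idx N × Idx N × Idx N → Idx N × Idx N × Idx N)
    (s : Idx N × Idx N × Idx N → ℂ) :
    sp σ (fun x => -(s x)) = - sp σ s := by
  ext x y; simp only [sp, Matrix.neg_apply]; split_ifs <;> simp

/-! ### Closed forms for the generators -/

lemma P12_eq (N : ℕ) : P12 N = sp (fun x => (x.2.1, x.1, x.2.2))
    (fun x => (-1 : ℂ) ^ (pty x.1 * pty x.2.1)) := by
  ext x y
  simp only [P12, Matrix.sum_apply, Matrix.smul_apply, smul_eq_mul, gk3, Em,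
    Matrix.single, Matrix.of_apply, Matrix.one_apply, sp]
  rw [Finset.sum_eq_single x.1]
  · rw [Finset.sum_eq_single y.1]
    · rcases eq_or_ne y (x.2.1, x.1, x.2.2) with h | h
      · subst h
        simp only [if_pos rfl, and_self, if_true, true_and, mul_one, one_mul]
        obtain ⟨⟨c1,c2⟩,⟨d1,d2⟩,e⟩ := x
        cases c1 <;> cases d1 <;> norm_num [pty]
      · rw [if_neg h]
        by_cases h1 : y.1 = x.2.1
        · by_cases h2 : x.1 = y.2.1
          · by_cases h3 : x.2.2 = y.2.2
            · exact (h (Prod.ext h1 (Prod.ext h2.symm h3.symm))).elim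
            · simp [h3]
          · simp [h2]
        · simp [h1]
    · intro z _ hz; simp [hz]
    · intro h; exact absurd (Finset.mem_univ _) h
  · intro z _ hz; simp [hz]
  · intro h; exact absurd (Finset.mem_univ _) h

lemma P13_eq (N : ℕ) : P13 N = sp (fun x => (x.2.2, x.2.1, x.1))
    (fun x => (-1 : ℂ) ^ (pty x.1 * pty x.2.2 + (pty x.1 + pty x.2.2) * pty x.2.1)) := by
  ext x y
  simp only [P13, Matrix.sum_apply, Matrix.smul_apply, smul_eq_mul, gk3, Em,
    Matrix.single, Matrix.of_apply, Matrix.one_apply, sp]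
  rw [Finset.sum_eq_single x.1]
  · rw [Finset.sum_eq_single y.1]
    · rcases eq_or_ne y (x.2.2, x.2.1, x.1) with h | h
      · subst h
        simp only [if_pos rfl, and_self, if_true, true_and, mul_one, one_mul]
        obtain ⟨⟨c1,c2⟩,⟨d1,d2⟩,⟨e1,e2⟩⟩ := x
        cases c1 <;> cases d1 <;> cases e1 <;> norm_num [pty]
      · rw [if_neg h]
        by_cases h1 : y.1 = x.2.2
        · by_cases h2 : x.2.1 = y.2.1
          · by_cases h3 : x.1 = y.2.2
            · exact (h (Prod.ext h1 (Prod.ext h2.symm h3.symm))).elim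
            · simp [h3]
          · simp [h2]
        · simp [h1]
    · intro z _ hz; simp [hz]
    · intro h; exact absurd (Finset.mem_univ _) h
  · intro z _ hz; simp [hz]
  · intro h; exact absurd (Finset.mem_univ _) h

lemma P23_eq (N : ℕ) : P23 N = sp (fun x => (x.1, x.2.2, x.2.1))
    (fun x => (-1 : ℂ) ^ (pty x.2.1 * pty x.2.2)) := by
  ext x y
  simp only [P23, Matrix.sum_apply, Matrix.smul_apply, smul_eq_mul, gk3, Em,
    Matrix.single, Matrix.of_apply, Matrix.one_apply, sp]
  rw [Finset.sum_eq_single x.2.1]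
  · rw [Finset.sum_eq_single y.2.1]
    · rcases eq_or_ne y (x.1, x.2.2, x.2.1) with h | h
      · subst h
        simp only [if_pos rfl, and_self, if_true, true_and, mul_one, one_mul]
        obtain ⟨⟨c1,c2⟩,⟨d1,d2⟩,⟨e1,e2⟩⟩ := x
        cases c1 <;> cases d1 <;> cases e1 <;> norm_num [pty]
      · rw [if_neg h]
        by_cases h1 : x.1 = y.1
        · by_cases h2 : y.2.1 = x.2.2
          · by_cases h3 : x.2.1 = y.2.2
            · exact (h (Prod.ext h1.symm (Prod.ext h2 h3.symm))).elim
            · simp [h3]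
          · simp [h2]
        · simp [h1]
    · intro z _ hz; simp [hz]
    · intro h; exact absurd (Finset.mem_univ _) h
  · intro z _ hz; simp [hz]
  · intro h; exact absurd (Finset.mem_univ _) h

lemma Jmat_apply {N : ℕ} (a b : Idx N) :
    Jmat N a b = if b = nneg a then (-1 : ℂ) ^ pty a else 0 := by
  simp only [Jmat, Em, Matrix.sum_apply, Matrix.smul_apply, Matrix.single,
    Matrix.of_apply, smul_eq_mul]
  rw [Finset.sum_eq_single a]
  · simp [and_comm, eq_comm]
  · intro z _ hz; simp [hz]
  · intro h; exact absurd (Finset.mem_univ _) h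

lemma J1_eq (N : ℕ) : J1 N = sp (fun x => (nneg x.1, x.2.1, x.2.2))
    (fun x => (-1 : ℂ) ^ pty x.1) := by
  ext x y
  simp only [J1, gk3, Jmat_apply, Matrix.one_apply, sp]
  rcases eq_or_ne y (nneg x.1, x.2.1, x.2.2) with h | h
  · subst h; simp
  · rw [if_neg h]
    by_cases h1 : y.1 = nneg x.1
    · by_cases h2 : x.2.1 = y.2.1
      · by_cases h3 : x.2.2 = y.2.2
        · exact (h (Prod.ext h1 (Prod.ext h2.symm h3.symm))).elim
        · simp [h3]
      · simp [h2]
    · simp [h1]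

lemma J2_eq (N : ℕ) : J2 N = sp (fun x => (x.1, nneg x.2.1, x.2.2))
    (fun x => (-1 : ℂ) ^ (pty x.1 + pty x.2.1)) := by
  ext x y
  simp only [J2, gk3, Jmat_apply, Matrix.one_apply, sp]
  rcases eq_or_ne y (x.1, nneg x.2.1, x.2.2) with h | h
  · subst h; simp [pow_add]
  · rw [if_neg h]
    by_cases h1 : x.1 = y.1
    · by_cases h2 : y.2.1 = nneg x.2.1
      · by_cases h3 : x.2.2 = y.2.2
        · exact (h (Prod.ext h1.symm (Prod.ext h2 h3.symm))).elim
        · simp [h3]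
      · simp [h2]
    · simp [h1]

lemma J3_eq (N : ℕ) : J3 N = sp (fun x => (x.1, x.2.1, nneg x.2.2))
    (fun x => (-1 : ℂ) ^ (pty x.1 + pty x.2.1 + pty x.2.2)) := by
  ext x y
  simp only [J3, gk3, Jmat_apply, Matrix.one_apply, sp]
  rcases eq_or_ne y (x.1, x.2.1, nneg x.2.2) with h | h
  · subst h; simp [pow_add]
  · rw [if_neg h]
    by_cases h1 : x.1 = y.1
    · by_cases h2 : x.2.1 = y.2.1
      · by_cases h3 : y.2.2 = nneg x.2.2
        · exact (h (Prod.ext h1.symm (Prod.ext h2.symm h3))).elim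
        · simp [h3]
      · simp [h2]
    · simp [h1]

/-! ### The twelve product identities -/

section Products
variable (N : ℕ)

lemma L2 : P12 N * (J2 N * J3 N * P23 N) = J1 N * J3 N * (P12 N * P23 N) := by
  rw [P12_eq, P23_eq, J1_eq, J2_eq, J3_eq]
  simp only [sp_mul]
  exact sp_congr
    (fun x => by obtain ⟨⟨c1,m1⟩,⟨c2,m2⟩,⟨c3,m3⟩⟩ := x; simp [nneg])
    (fun x => by obtain ⟨⟨c1,m1⟩,⟨c2,m2⟩,⟨c3,m3⟩⟩ := x
                 cases c1 <;> cases c2 <;> cases c3 <;> norm_num [pty, nneg])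

lemma L3 : (J1 N * J2 N * P12 N) * P23 N = J1 N * J2 N * (P12 N * P23 N) := by
  rw [P12_eq, P23_eq, J1_eq, J2_eq]
  simp only [sp_mul]
  exact sp_congr
    (fun x => by obtain ⟨⟨c1,m1⟩,⟨c2,m2⟩,⟨c3,m3⟩⟩ := x; simp [nneg])
    (fun x => by obtain ⟨⟨c1,m1⟩,⟨c2,m2⟩,⟨c3,m3⟩⟩ := x
                 cases c1 <;> cases c2 <;> cases c3 <;> norm_num [pty, nneg])

lemma L4 : (J1 N * J2 N * P12 N) * (J2 N * J3 N * P23 N) = J2 N * J3 N * (P12 N * P23 N) := by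
  rw [P12_eq, P23_eq, J1_eq, J2_eq, J3_eq]
  simp only [sp_mul]
  exact sp_congr
    (fun x => by obtain ⟨⟨c1,m1⟩,⟨c2,m2⟩,⟨c3,m3⟩⟩ := x; simp [nneg])
    (fun x => by obtain ⟨⟨c1,m1⟩,⟨c2,m2⟩,⟨c3,m3⟩⟩ := x
                 cases c1 <;> cases c2 <;> cases c3 <;> norm_num [pty, nneg])

lemma L5 : P13 N * P12 N = P12 N * P23 N := by
  rw [P12_eq, P23_eq, P13_eq]
  simp only [sp_mul]
  exact sp_congr
    (fun x => by obtain ⟨⟨c1,m1⟩,⟨c2,m2⟩,⟨c3,m3⟩⟩ := x; simp [nneg])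
    (fun x => by obtain ⟨⟨c1,m1⟩,⟨c2,m2⟩,⟨c3,m3⟩⟩ := x
                 cases c1 <;> cases c2 <;> cases c3 <;> norm_num [pty, nneg])

lemma L6 : P13 N * (J1 N * J2 N * P12 N) = -(J2 N * J3 N * (P12 N * P23 N)) := by
  rw [P12_eq, P23_eq, P13_eq, J1_eq, J2_eq, J3_eq]
  simp only [sp_mul]
  rw [← sp_neg]
  exact sp_congr
    (fun x => by obtain ⟨⟨c1,m1⟩,⟨c2,m2⟩,⟨c3,m3⟩⟩ := x; simp [nneg])
    (fun x => by obtain ⟨⟨c1,m1⟩,⟨c2,m2⟩,⟨c3,m3⟩⟩ := x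
                 cases c1 <;> cases c2 <;> cases c3 <;> norm_num [pty, nneg])

lemma L7 : (J1 N * J3 N * P13 N) * P12 N = J1 N * J3 N * (P12 N * P23 N) := by
  rw [P12_eq, P23_eq, P13_eq, J1_eq, J3_eq]
  simp only [sp_mul]
  exact sp_congr
    (fun x => by obtain ⟨⟨c1,m1⟩,⟨c2,m2⟩,⟨c3,m3⟩⟩ := x; simp [nneg])
    (fun x => by obtain ⟨⟨c1,m1⟩,⟨c2,m2⟩,⟨c3,m3⟩⟩ := x
                 cases c1 <;> cases c2 <;> cases c3 <;> norm_num [pty, nneg])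

lemma L8 : (J1 N * J3 N * P13 N) * (J1 N * J2 N * P12 N) = -(J1 N * J2 N * (P12 N * P23 N)) := by
  rw [P12_eq, P23_eq, P13_eq, J1_eq, J2_eq, J3_eq]
  simp only [sp_mul]
  rw [← sp_neg]
  exact sp_congr
    (fun x => by obtain ⟨⟨c1,m1⟩,⟨c2,m2⟩,⟨c3,m3⟩⟩ := x; simp [nneg])
    (fun x => by obtain ⟨⟨c1,m1⟩,⟨c2,m2⟩,⟨c3,m3⟩⟩ := x
                 cases c1 <;> cases c2 <;> cases c3 <;> norm_num [pty, nneg])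

lemma L9 : P23 N * P13 N = P12 N * P23 N := by
  rw [P12_eq, P23_eq, P13_eq]
  simp only [sp_mul]
  exact sp_congr
    (fun x => by obtain ⟨⟨c1,m1⟩,⟨c2,m2⟩,⟨c3,m3⟩⟩ := x; simp [nneg])
    (fun x => by obtain ⟨⟨c1,m1⟩,⟨c2,m2⟩,⟨c3,m3⟩⟩ := x
                 cases c1 <;> cases c2 <;> cases c3 <;> norm_num [pty, nneg])

lemma L10 : P23 N * (J1 N * J3 N * P13 N) = J1 N * J2 N * (P12 N * P23 N) := by
  rw [P12_eq, P23_eq, P13_eq, J1_eq, J2_eq, J3_eq]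
  simp only [sp_mul]
  exact sp_congr
    (fun x => by obtain ⟨⟨c1,m1⟩,⟨c2,m2⟩,⟨c3,m3⟩⟩ := x; simp [nneg])
    (fun x => by obtain ⟨⟨c1,m1⟩,⟨c2,m2⟩,⟨c3,m3⟩⟩ := x
                 cases c1 <;> cases c2 <;> cases c3 <;> norm_num [pty, nneg])

lemma L11 : (J2 N * J3 N * P23 N) * P13 N = J2 N * J3 N * (P12 N * P23 N) := by
  rw [P12_eq, P23_eq, P13_eq, J2_eq, J3_eq]
  simp only [sp_mul]
  exact sp_congr
    (fun x => by obtain ⟨⟨c1,m1⟩,⟨c2,m2⟩,⟨c3,m3⟩⟩ := x; simp [nneg])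
    (fun x => by obtain ⟨⟨c1,m1⟩,⟨c2,m2⟩,⟨c3,m3⟩⟩ := x
                 cases c1 <;> cases c2 <;> cases c3 <;> norm_num [pty, nneg])

lemma L12 : (J2 N * J3 N * P23 N) * (J1 N * J3 N * P13 N) = J1 N * J3 N * (P12 N * P23 N) := by
  rw [P12_eq, P23_eq, P13_eq, J1_eq, J2_eq, J3_eq]
  simp only [sp_mul]
  exact sp_congr
    (fun x => by obtain ⟨⟨c1,m1⟩,⟨c2,m2⟩,⟨c3,m3⟩⟩ := x; simp [nneg])
    (fun x => by obtain ⟨⟨c1,m1⟩,⟨c2,m2⟩,⟨c3,m3⟩⟩ := x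
                 cases c1 <;> cases c2 <;> cases c3 <;> norm_num [pty, nneg])

end Products

/-- The rational queer R-matrix satisfies the associative Yang–Baxter equation. -/
theorem rational_queer_AYBE (N : ℕ) (x y u₁ u₂ u₃ : ℂ)
    (hx : x ≠ 0) (hy : y ≠ 0) (hxy : x - y ≠ 0)
    (h12 : u₁ - u₂ ≠ 0) (h23 : u₂ - u₃ ≠ 0) (h13 : u₁ - u₃ ≠ 0)
    (h12' : u₁ + u₂ ≠ 0) (h23' : u₂ + u₃ ≠ 0) (h13' : u₁ + u₃ ≠ 0) :
    Rr12 N x u₁ u₂ * Rr23 N y u₂ u₃ - Rr13 N y u₁ u₃ * Rr12 N (x - y) u₁ u₂ -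
      Rr23 N (y - x) u₂ u₃ * Rr13 N x u₁ u₃ = 0 := by
  have hyx : y - x ≠ 0 := fun h => hxy (by linear_combination -h)
  simp only [Rr12, Rr13, Rr23, add_mul, mul_add, smul_mul_assoc, mul_smul_comm,
    smul_smul, one_mul, mul_one]
  simp only [L2, L3, L4, L5, L6, L7, L8, L9, L10, L11, L12]
  match_scalars <;> field_simp <;> ring
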